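/- For the Young flattening with n₃ = 3 and p = 1: if A ∈ F^{n₂×n₁×3} has slices X₁, X₂, X₃ ∈ F^{n₂×n₁}, then the 3n₂ × 3n₁ block matrix M = [[0, X₃, −X₂], [−X₃, 0, X₁], [X₂, −X₁, 0]] satisfies rank(M) ≤ 2·rank(A), where rank(A) denotes the tensor rank of A. -/

import Mathlib

/-- The Strassen block matrix `[[0, X₃, −X₂], [−X₃, 0, X₁], [X₂, −X₁, 0]]`
built from the three slices `X₁ = X 0`, `X₂ = X 1`, `X₃ = X 2` of a tensor in
`F^{n₂×n₁×3}`. -/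
def strassenMatrix {F : Type*} [Field F] {n₁ n₂ : ℕ}
    (X : Fin 3 → Matrix (Fin n₂) (Fin n₁) F) :
    Matrix (Fin 3 × Fin n₂) (Fin 3 × Fin n₁) F :=
  fun p q =>
    (![![0, X 2, -(X 1)], ![-(X 2), 0, X 0], ![X 1, -(X 0), 0]] p.1 q.1) p.2 q.2

/-- The tensor rank of a tensor in `F^{n₂×n₁×3}` given by its slices: the
minimal `r` such that `X k = Σᵢ cᵢₖ • aᵢ bᵢᵀ`. -/
noncomputable def sliceRank {F : Type*} [Field F] {n₁ n₂ : ℕ}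
    (X : Fin 3 → Matrix (Fin n₂) (Fin n₁) F) : ℕ :=
  sInf {r | ∃ (a : Fin r → Fin n₂ → F) (b : Fin r → Fin n₁ → F)
    (c : Fin r → Fin 3 → F),
    ∀ k, X k = ∑ i, c i k • Matrix.vecMulVec (a i) (b i)}

/-!
For a rank-one tensor `c ⊗ a ⊗ b` the Strassen matrix is the Kronecker product
`crossMatrix c ⊗ₖ a bᵀ`, whose rank is at most that of `crossMatrix c`; the latter matrix
kills `c`, so its rank is at most `2`. Since the Strassen matrix is additive in the tensor,
subadditivity of the rank along a decomposition of length `sliceRank X` gives the bound.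
-/

open Matrix
open scoped Kronecker

namespace Matrix

theorem rank_add_le {K m n : Type*} [Field K] [Fintype n] (A B : Matrix m n K) :
    (A + B).rank ≤ A.rank + B.rank := by
  rw [rank, rank, rank, mulVecLin_add]
  exact (Submodule.finrank_mono (LinearMap.range_add_le _ _)).trans
    (Submodule.finrank_add_le_finrank_add_finrank _ _)

theorem rank_sum_le {K ι m n : Type*} [Field K] [Fintype n] (s : Finset ι)
    (A : ι → Matrix m n K) : (∑ i ∈ s, A i).rank ≤ ∑ i ∈ s, (A i).rank :=
  Finset.le_sum_of_subadditive (fun B : Matrix m n K => B.rank) rank_zero.le rank_add_le s A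

theorem rank_lt_card_of_mulVec_eq_zero {K m n : Type*} [Field K] [Fintype n]
    {A : Matrix m n K} {v : n → K} (hv : v ≠ 0) (hAv : A *ᵥ v = 0) :
    A.rank < Fintype.card n := by
  have hker : 0 < Module.finrank K (LinearMap.ker A.mulVecLin) :=
    Module.finrank_pos_iff_exists_ne_zero.2 ⟨⟨v, hAv⟩, fun h => hv (congrArg Subtype.val h)⟩
  have hrank_nullity := LinearMap.finrank_range_add_finrank_ker A.mulVecLin
  rw [Module.finrank_fintype_fun_eq_card] at hrank_nullity
  exact (Nat.lt_add_of_pos_right hker).trans_eq hrank_nullity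

theorem rank_kronecker_vecMulVec_le {R m n p q : Type*} [CommRing R] [StrongRankCondition R]
    [Fintype m] [Fintype n] [Fintype q] (A : Matrix m n R) (a : p → R) (b : q → R) :
    (A ⊗ₖ vecMulVec a b).rank ≤ A.rank := by
  classical
  have hfactor : A ⊗ₖ vecMulVec a b =
      ((1 : Matrix m m R) ⊗ₖ replicateCol Unit a) * (A ⊗ₖ (1 : Matrix Unit Unit R)) *
        ((1 : Matrix n n R) ⊗ₖ replicateRow Unit b) := by
    rw [← mul_kronecker_mul, ← mul_kronecker_mul, Matrix.one_mul, Matrix.mul_one, Matrix.mul_one,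
      ← vecMulVec_eq]
  have hunit : A ⊗ₖ (1 : Matrix Unit Unit R) =
      A.submatrix (Equiv.prodPUnit m) (Equiv.prodPUnit n) := by
    ext ⟨i, _⟩ ⟨j, _⟩
    simp
  calc (A ⊗ₖ vecMulVec a b).rank
      ≤ (((1 : Matrix m m R) ⊗ₖ replicateCol Unit a) * (A ⊗ₖ (1 : Matrix Unit Unit R))).rank := by
        rw [hfactor]
        exact rank_mul_le_left _ _
    _ ≤ (A ⊗ₖ (1 : Matrix Unit Unit R)).rank := rank_mul_le_right _ _
    _ = A.rank := by rw [hunit, rank_submatrix]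

end Matrix

def crossMatrix {R : Type*} [CommRing R] (c : Fin 3 → R) : Matrix (Fin 3) (Fin 3) R :=
  !![0, c 2, -c 1; -c 2, 0, c 0; c 1, -c 0, 0]

theorem crossMatrix_mulVec {R : Type*} [CommRing R] (c v : Fin 3 → R) :
    crossMatrix c *ᵥ v = v ⨯₃ c := by
  ext i
  fin_cases i <;> simp [crossMatrix, cross_apply, mulVec, dotProduct, Fin.sum_univ_three] <;> ring

theorem rank_crossMatrix_le {K : Type*} [Field K] (c : Fin 3 → K) :
    (crossMatrix c).rank ≤ 2 := by
  rcases eq_or_ne c 0 with rfl | hc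
  · have hzero : crossMatrix (0 : Fin 3 → K) = 0 := by
      ext i j
      fin_cases i <;> fin_cases j <;> simp [crossMatrix]
    simp [hzero]
  · have := rank_lt_card_of_mulVec_eq_zero hc (by rw [crossMatrix_mulVec, cross_self])
    simpa using Nat.le_of_lt_succ this

section Strassen

variable {F : Type*} [Field F] {n₁ n₂ : ℕ}

theorem strassenMatrix_sum {ι : Type*} (s : Finset ι)
    (X : ι → Fin 3 → Matrix (Fin n₂) (Fin n₁) F) :
    strassenMatrix (∑ i ∈ s, X i) = ∑ i ∈ s, strassenMatrix (X i) := by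
  ext ⟨j, x⟩ ⟨l, y⟩
  fin_cases j <;> fin_cases l <;>
    simp only [strassenMatrix, Fin.zero_eta, Fin.mk_one, Fin.reduceFinMk, Matrix.sum_apply,
      cons_val_zero, cons_val_one, cons_val_two, tail_cons, head_cons, Matrix.neg_apply,
      Matrix.zero_apply, Finset.sum_apply, Finset.sum_neg_distrib, Finset.sum_const_zero]

theorem strassenMatrix_smul_vecMulVec (a : Fin n₂ → F) (b : Fin n₁ → F) (c : Fin 3 → F) :
    strassenMatrix (fun k => c k • vecMulVec a b) = crossMatrix c ⊗ₖ vecMulVec a b := by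
  ext ⟨j, x⟩ ⟨l, y⟩
  fin_cases j <;> fin_cases l <;>
    simp only [strassenMatrix, kronecker_apply, crossMatrix, Fin.zero_eta, Fin.mk_one,
      Fin.reduceFinMk, of_apply, cons_val_zero, cons_val_one, cons_val_two, tail_cons, head_cons,
      Matrix.neg_apply, Matrix.zero_apply, Matrix.smul_apply, smul_eq_mul, neg_mul, zero_mul]

theorem exists_sliceDecomposition (X : Fin 3 → Matrix (Fin n₂) (Fin n₁) F) :
    ∃ (r : ℕ) (a : Fin r → Fin n₂ → F) (b : Fin r → Fin n₁ → F) (c : Fin r → Fin 3 → F),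
      ∀ k, X k = ∑ i, c i k • vecMulVec (a i) (b i) := by
  classical
  let e := (Fintype.equivFin (Fin n₂ × Fin n₁)).symm
  refine ⟨_, fun i => Pi.single (e i).1 1, fun i => Pi.single (e i).2 1,
    fun i k => X k (e i).1 (e i).2, fun k => ?_⟩
  simp_rw [← single_eq_single_vecMulVec_single, smul_single, smul_eq_mul, mul_one]
  rw [e.sum_comp (fun p => single p.1 p.2 (X k p.1 p.2)), Fintype.sum_prod_type]
  exact matrix_eq_sum_single (X k)

theorem exists_sliceDecomposition_sliceRank (X : Fin 3 → Matrix (Fin n₂) (Fin n₁) F) :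
    ∃ (a : Fin (sliceRank X) → Fin n₂ → F) (b : Fin (sliceRank X) → Fin n₁ → F)
      (c : Fin (sliceRank X) → Fin 3 → F),
      ∀ k, X k = ∑ i, c i k • vecMulVec (a i) (b i) :=
  Nat.sInf_mem (exists_sliceDecomposition X)

end Strassen

/-- Strassen's equations: the rank of the skew block matrix built from the
slices of a tensor `A ∈ F^{n₂×n₁×3}` is at most twice the tensor rank of `A`. -/
theorem stmt9 {F : Type*} [Field F] (n₁ n₂ : ℕ)
    (X : Fin 3 → Matrix (Fin n₂) (Fin n₁) F) :
    (strassenMatrix X).rank ≤ 2 * sliceRank X := by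
  obtain ⟨a, b, c, hX⟩ := exists_sliceDecomposition_sliceRank X
  have hsum : strassenMatrix X = ∑ i, crossMatrix (c i) ⊗ₖ vecMulVec (a i) (b i) := by
    simp_rw [← strassenMatrix_smul_vecMulVec, ← strassenMatrix_sum]
    congr 1
    ext1 k
    rw [hX k, Finset.sum_apply]
  calc (strassenMatrix X).rank
      ≤ ∑ i, (crossMatrix (c i) ⊗ₖ vecMulVec (a i) (b i)).rank := hsum ▸ rank_sum_le _ _
    _ ≤ ∑ _i : Fin (sliceRank X), 2 :=
        Finset.sum_le_sum fun i _ =>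
          (rank_kronecker_vecMulVec_le _ _ _).trans (rank_crossMatrix_le (c i))
    _ = 2 * sliceRank X := by simp [mul_comm]
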